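/- Let β be a homogeneous braid word on n strands: there is a function ε : {1,…,n−1} → {+1,−1} with ε_t = ε(k_t) for every letter t, and every k ∈ {1,…,n−1} occurs as some k_t. Fix c ∈ {+1,−1} and define ι : E_β → {+1,−1} by ι(p,t) = ε(p−1) for p ≥ 2 and ι(1,t) = c for all levels t. Then ι is an inversion datum on β, and ℓ(β,ι) = w(β)/2 − Σ_{k=1}^{n−1} ε(k)/2. -/

import Mathlib

/-- A braid word on `n` strands with `m` letters. Strand positions are 0-indexed:
the index `p : Fin n` represents the mathematical position `p+1 ∈ {1,…,n}`.
The `t`-th letter is a crossing of sign `ε t` involving the strand positions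
`k t` and `k t + 1` (i.e. mathematical positions `k t + 1` and `k t + 2`). -/
structure BraidWord (n m : ℕ) where
  k : Fin m → ℕ
  hk : ∀ t, k t + 1 < n
  ε : Fin m → ℤ
  hε : ∀ t, ε t = 1 ∨ ε t = -1

namespace BraidWord

variable {n m : ℕ}

/-- Segments of the closed braid diagram: `(p, t)` is the segment at horizontal
position `p` (0-indexed) and level `t` (mod `m`); the `t`-th letter has its bottom
at level `t` and its top at level `t+1`, and `(p, 0)` is the `p`-th closure segment. -/
abbrev Seg (n m : ℕ) := Fin n × Fin m

/-- Segment adjacent to the `t`-th crossing at the bottom left. -/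
def eBL (β : BraidWord n m) (t : Fin m) : Seg n m :=
  (⟨β.k t, by have := β.hk t; omega⟩, t)

/-- Segment adjacent to the `t`-th crossing at the bottom right. -/
def eBR (β : BraidWord n m) (t : Fin m) : Seg n m :=
  (⟨β.k t + 1, β.hk t⟩, t)

/-- Segment adjacent to the `t`-th crossing at the top left. -/
def eTL [NeZero m] (β : BraidWord n m) (t : Fin m) : Seg n m :=
  (⟨β.k t, by have := β.hk t; omega⟩, t + 1)

/-- Segment adjacent to the `t`-th crossing at the top right. -/
def eTR [NeZero m] (β : BraidWord n m) (t : Fin m) : Seg n m :=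
  (⟨β.k t + 1, β.hk t⟩, t + 1)

/-- The writhe of a braid word: the sum of the signs of its crossings. -/
def writhe (β : BraidWord n m) : ℤ := ∑ t, β.ε t

/-- The allowed sign patterns `(BL, BR, TL, TR)` around a crossing of sign `e`. -/
def allowedQuad (e a b c d : ℤ) : Prop :=
  if e = 1 then
    (a = 1 ∧ b = -1 ∧ c = -1 ∧ d = 1) ∨ (a = -1 ∧ b = 1 ∧ c = 1 ∧ d = -1) ∨
    (a = -1 ∧ b = -1 ∧ c = -1 ∧ d = -1) ∨ (a = -1 ∧ b = 1 ∧ c = -1 ∧ d = 1) ∨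
    (a = 1 ∧ b = 1 ∧ c = 1 ∧ d = 1)
  else
    (a = 1 ∧ b = -1 ∧ c = -1 ∧ d = 1) ∨ (a = -1 ∧ b = 1 ∧ c = 1 ∧ d = -1) ∨
    (a = -1 ∧ b = -1 ∧ c = -1 ∧ d = -1) ∨ (a = 1 ∧ b = -1 ∧ c = 1 ∧ d = -1) ∨
    (a = 1 ∧ b = 1 ∧ c = 1 ∧ d = 1)

/-- An inversion datum on a braid word: a `±1`-assignment to each segment,
constant along strands away from crossings, with allowed patterns at crossings. -/
def IsInvDatum [NeZero m] (β : BraidWord n m) (ι : Seg n m → ℤ) : Prop :=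
  (∀ e : Seg n m, ι e = 1 ∨ ι e = -1) ∧
  (∀ (p : Fin n) (t : Fin m), p.val ≠ β.k t → p.val ≠ β.k t + 1 → ι (p, t) = ι (p, t + 1)) ∧
  (∀ t : Fin m, allowedQuad (β.ε t) (ι (β.eBL t)) (ι (β.eBR t)) (ι (β.eTL t)) (ι (β.eTR t)))

/-- A state on a braid word: an integer assignment to each segment, constant along
strands away from crossings, conserved at each crossing. -/
def IsState [NeZero m] (β : BraidWord n m) (s : Seg n m → ℤ) : Prop :=
  (∀ (p : Fin n) (t : Fin m), p.val ≠ β.k t → p.val ≠ β.k t + 1 → s (p, t) = s (p, t + 1)) ∧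
  (∀ t : Fin m, s (β.eBL t) + s (β.eBR t) = s (β.eTL t) + s (β.eTR t))

/-- The sign of an integer, with the convention that the sign of `0` is `+1`. -/
def isign (a : ℤ) : ℤ := if 0 ≤ a then 1 else -1

/-- A state is valid for an inversion datum `ι` if its signs agree with `ι` and the
inequalities required for the extended `R`-matrix to be nonzero hold at each crossing. -/
def IsValid [NeZero m] (β : BraidWord n m) (ι s : Seg n m → ℤ) : Prop :=
  β.IsState s ∧ (∀ e : Seg n m, isign (s e) = ι e) ∧
  ∀ t : Fin m,
    if β.ε t = 1 then s (β.eTR t) ≤ s (β.eBL t) ∨ (0 ≤ s (β.eTR t) ∧ s (β.eBL t) < 0)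
    else s (β.eTL t) ≤ s (β.eBR t) ∨ (0 ≤ s (β.eTL t) ∧ s (β.eBR t) < 0)

/-- The ground state associated to an inversion datum: `s₀(e) = (ι(e) - 1)/2 ∈ {0, -1}`. -/
def groundState (ι : Seg n m → ℤ) : Seg n m → ℤ := fun e => (ι e - 1) / 2

/-- The (minimal) x-degree of a state:
`d_x(s) = -(n-1)/2 + ∑_t ε_t (s(e_BR(t)) + s(e_TR(t)) + 1)/2`. -/
def xdeg [NeZero m] (β : BraidWord n m) (s : Seg n m → ℤ) : ℚ :=
  -((n : ℚ) - 1) / 2 +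
    ∑ t : Fin m, (β.ε t : ℚ) * (((s (β.eBR t) : ℚ) + (s (β.eTR t) : ℚ) + 1) / 2)

/-- A pair (braid word, inversion datum) is nice if every valid state has nonnegative
x-degree and only finitely many valid states have x-degree below any given bound. -/
def IsNice [NeZero m] (β : BraidWord n m) (ι : Seg n m → ℤ) : Prop :=
  (∀ s, β.IsValid ι s → 0 ≤ β.xdeg s) ∧
  ∀ M : ℝ, {s : Seg n m → ℤ | β.IsValid ι s ∧ ((β.xdeg s : ℚ) : ℝ) ≤ M}.Finite

/-- The invariant `ℓ(β,ι) = -∑_{p=2}^{n} ι(b_p)/2 + ∑_t ε_t (1 + ι(e_BR(t))·ι(e_TR(t)))/4`. -/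
def ell [NeZero m] (β : BraidWord n m) (ι : Seg n m → ℤ) : ℚ :=
  -(∑ p : Fin n, if p.val = 0 then 0 else (ι (p, 0) : ℚ)) / 2 +
    ∑ t : Fin m, (β.ε t : ℚ) * ((1 + (ι (β.eBR t) : ℚ) * (ι (β.eTR t) : ℚ)) / 4)

end BraidWord

/-!
On a homogeneous braid word the proposed `ι` depends only on the strand position, and the
right-hand strand of every crossing `t` carries the value `ε(k_t) = ε_t`. So each crossing
sees the pattern `(a, ε_t, a, ε_t)`, which is allowed for either value of `a`, and each
crossing term of `ℓ` is `ε_t (1 + ε_t²) / 4 = ε_t / 2`; the closure term is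
`-∑_{p ≥ 2} ε(p - 1) / 2`.
-/

open Finset

theorem Fin.sum_ite_val_eq_zero_eq_sum_range_pred {M : Type*} [AddCommMonoid M] {n : ℕ}
    (F : Fin n → M) (g : ℕ → M) (hF : ∀ p : Fin n, p.val ≠ 0 → F p = g (p.val - 1)) :
    ∑ p : Fin n, (if p.val = 0 then 0 else F p) = ∑ j ∈ range (n - 1), g j := by
  cases n with
  | zero => simp
  | succ n =>
    rw [Fin.sum_univ_succ, sum_range]
    simp only [Fin.val_zero, if_true, Fin.val_succ, Nat.add_one_ne_zero, if_false, zero_add]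
    exact sum_congr rfl fun p _ => by simpa using hF p.succ (by simp)

namespace BraidWord

variable {n m : ℕ}

theorem allowedQuad_of_right_eq_sign {e a : ℤ} (he : e = 1 ∨ e = -1) (ha : a = 1 ∨ a = -1) :
    allowedQuad e a e a e := by
  rcases he with rfl | rfl <;> rcases ha with rfl | rfl <;> simp [allowedQuad]

variable [NeZero m]

theorem isInvDatum_of_strandwise (β : BraidWord n m) (f : Fin n → ℤ)
    (hf : ∀ p, f p = 1 ∨ f p = -1) (hright : ∀ t, f ⟨β.k t + 1, β.hk t⟩ = β.ε t) :
    β.IsInvDatum fun e => f e.1 :=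
  ⟨fun e => hf e.1, fun _ _ _ _ => rfl, fun t => by
    simp only [eBL, eBR, eTL, eTR, hright]
    exact allowedQuad_of_right_eq_sign (β.hε t) (hf _)⟩

theorem ell_eq_of_right_eq_sign (β : BraidWord n m) (ι : Seg n m → ℤ)
    (hBR : ∀ t, ι (β.eBR t) = β.ε t) (hTR : ∀ t, ι (β.eTR t) = β.ε t) :
    β.ell ι =
      (β.writhe : ℚ) / 2 - (∑ p : Fin n, if p.val = 0 then 0 else (ι (p, 0) : ℚ)) / 2 := by
  have hcrossing : ∀ t, (β.ε t : ℚ) * ((1 + (ι (β.eBR t) : ℚ) * (ι (β.eTR t) : ℚ)) / 4)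
      = (β.ε t : ℚ) / 2 := fun t => by
    rw [hBR, hTR]
    rcases β.hε t with h | h <;> rw [h] <;> norm_num
  rw [ell, writhe, sum_congr rfl fun t _ => hcrossing t, ← sum_div]
  push_cast
  ring

end BraidWord

theorem homogeneous_braid_inversion_datum (n m : ℕ) [NeZero m] (β : BraidWord n m)
    (epsf : ℕ → ℤ) (hepsf : ∀ j, j + 1 < n → epsf j = 1 ∨ epsf j = -1)
    (hhom : ∀ t : Fin m, β.ε t = epsf (β.k t))
    (c : ℤ) (hc : c = 1 ∨ c = -1)
    (ι : BraidWord.Seg n m → ℤ)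
    (hιdef : ∀ (p : Fin n) (t : Fin m),
      ι (p, t) = if p.val = 0 then c else epsf (p.val - 1)) :
    β.IsInvDatum ι ∧
    β.ell ι = (β.writhe : ℚ) / 2 - (∑ j ∈ Finset.range (n - 1), (epsf j : ℚ)) / 2 := by
  let f : Fin n → ℤ := fun p => if p.val = 0 then c else epsf (p.val - 1)
  have hι : ι = fun e => f e.1 := funext fun e => hιdef e.1 e.2
  have hf : ∀ p, f p = 1 ∨ f p = -1 := fun p => by
    dsimp only [f]
    split_ifs
    exacts [hc, hepsf _ (by omega)]
  have hright : ∀ t, f ⟨β.k t + 1, β.hk t⟩ = β.ε t := fun t => by simp [f, hhom t]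
  subst hι
  refine ⟨β.isInvDatum_of_strandwise f hf hright, ?_⟩
  rw [β.ell_eq_of_right_eq_sign _ hright hright,
    Fin.sum_ite_val_eq_zero_eq_sum_range_pred _ (fun j => (epsf j : ℚ))
      fun p hp => by simp [f, hp]]
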